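/- Let G be a simple graph with vertex set V, and let a group Γ act on V by graph automorphisms of G. Fix a vertex v₀ ∈ V and a subset X ⊆ Γ that generates Γ. Suppose that (i) for every vertex v ∈ V there exists g ∈ Γ such that v and g • v₀ are joined by a walk in G, and (ii) for every g ∈ X ∪ X⁻¹, the vertices v₀ and g • v₀ are joined by a walk in G. Then the graph G is connected. -/

import Mathlib

/-! The `g ∈ Γ` for which `g • v₀` lies in the connected component of `v₀` form a subgroup,
since translating a walk from `v₀` to `b • v₀` by `a` gives a walk from `a • v₀` to `(a * b) • v₀`.
This subgroup contains `X`, hence is all of `Γ`, so every vertex is reachable from `v₀`. -/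

namespace SimpleGraph

variable {V Γ : Type*} [Group Γ] [MulAction Γ V] {G : SimpleGraph V}

theorem Reachable.smul (h_aut : ∀ (g : Γ) (u v : V), G.Adj u v ↔ G.Adj (g • u) (g • v))
    (g : Γ) {u v : V} (h : G.Reachable u v) : G.Reachable (g • u) (g • v) :=
  h.map ⟨(g • ·), (h_aut g _ _).mp⟩

def reachableSubgroup (h_aut : ∀ (g : Γ) (u v : V), G.Adj u v ↔ G.Adj (g • u) (g • v))
    (v₀ : V) : Subgroup Γ where
  carrier := {g | G.Reachable v₀ (g • v₀)}
  one_mem' := by simp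
  mul_mem' {a b} ha hb := by simpa [mul_smul] using ha.trans (hb.smul h_aut a)
  inv_mem' {a} ha := by simpa using (ha.smul h_aut a⁻¹).symm

theorem mem_reachableSubgroup
    {h_aut : ∀ (g : Γ) (u v : V), G.Adj u v ↔ G.Adj (g • u) (g • v)} {v₀ : V} {g : Γ} :
    g ∈ reachableSubgroup h_aut v₀ ↔ G.Reachable v₀ (g • v₀) :=
  Iff.rfl

end SimpleGraph

/-- **Putman's trick** (Lemma 2.12 of the paper). Let a group `Γ` act on the vertex
set `V` of a simple graph `G` by graph automorphisms. Fix a base vertex `v₀` and a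
generating set `X ⊆ Γ`. If every vertex is reachable from some `Γ`-translate of `v₀`,
and `v₀` is reachable from `g • v₀` for every `g ∈ X ∪ X⁻¹`, then `G` is connected. -/
theorem putman_trick {V : Type*} {Γ : Type*} [Group Γ] [MulAction Γ V]
    (G : SimpleGraph V)
    (h_aut : ∀ (g : Γ) (u v : V), G.Adj u v ↔ G.Adj (g • u) (g • v))
    (v₀ : V) (X : Set Γ) (h_gen : Subgroup.closure X = ⊤)
    (h_orbit : ∀ v : V, ∃ g : Γ, G.Reachable v (g • v₀))
    (h_edge : ∀ g ∈ X ∪ X⁻¹, G.Reachable v₀ (g • v₀)) :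
    G.Connected := by
  have h_top : G.reachableSubgroup h_aut v₀ = ⊤ :=
    top_le_iff.mp <| h_gen ▸ (Subgroup.closure_le _).mpr fun g hg => h_edge g (Or.inl hg)
  refine G.connected_iff_exists_forall_reachable.mpr ⟨v₀, fun v => ?_⟩
  obtain ⟨g, hg⟩ := h_orbit v
  have hv₀ : G.Reachable v₀ (g • v₀) := SimpleGraph.mem_reachableSubgroup.mp (h_top ▸ Subgroup.mem_top g)
  exact hv₀.trans hg.symm
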